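/- arXiv:2207.10275 — 5 statements merged into one kernel-verified Lean document; each statement's English description precedes it below -/
import Mathlib

section
/- Let T > 0, let h : ℝ → ℝ be differentiable on [0, T], and let α : ℝ → ℝ be a locally Lipschitz, monotone increasing function with α(0) = 0 (an extended class-K function). If h(0) < 0 and h'(t) ≤ α(−h(t)) for all t ∈ [0, T], then h(t) < 0 for all t ∈ [0, T]. -/
/-!
Let `s` be the first time `h` becomes nonnegative. On some `[l, s)` just before it, `-h` is
nonnegative and small, so the Lipschitz bound of `α` at `0` gives `α (-h) ≤ K * (-h)`, i.e. the
linear inequality `h' ≤ -K * h`. Grönwall's inequality then yields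
`h s ≤ h l * exp (-K * (s - l)) < 0`, a contradiction.
-/

open Set Real Filter Topology

theorem exists_first_le_of_lt {α β : Type*} [ConditionallyCompleteLinearOrder α]
    [TopologicalSpace α] [OrderTopology α] [LinearOrder β] [TopologicalSpace β]
    [OrderClosedTopology β] {f : α → β} {a b t : α} {c : β} (hf : ContinuousOn f (Icc a b))
    (ha : f a < c) (ht : t ∈ Icc a b) (hct : c ≤ f t) :
    ∃ s ∈ Ioc a b, c ≤ f s ∧ ∀ x ∈ Ico a s, f x < c := by
  set A := Icc a b ∩ f ⁻¹' Ici c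
  have hbdd : BddBelow A := ⟨a, fun x hx => hx.1.1⟩
  have hsA : sInf A ∈ A :=
    (hf.preimage_isClosed_of_isClosed isClosed_Icc isClosed_Ici).csInf_mem ⟨t, ht, hct⟩ hbdd
  refine ⟨sInf A, ⟨hsA.1.1.lt_of_ne ?_, hsA.1.2⟩, hsA.2, fun x hx => ?_⟩
  · rintro hs
    exact ha.not_ge (hs ▸ hsA.2)
  · by_contra! hcx
    exact hx.2.not_ge (csInf_le hbdd ⟨⟨hx.1, hx.2.le.trans hsA.1.2⟩, hcx⟩)

theorem LocallyLipschitz.exists_le_mul_of_map_zero {f : ℝ → ℝ} (hf : LocallyLipschitz f)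
    (hf0 : f 0 = 0) : ∃ K δ : ℝ, 0 < δ ∧ ∀ y ∈ Ico 0 δ, f y ≤ K * y := by
  obtain ⟨K, U, hU, hK⟩ := hf 0
  obtain ⟨δ, hδ, hball⟩ := Metric.mem_nhds_iff.1 hU
  refine ⟨K, δ, hδ, fun y hy => ?_⟩
  have hyU : y ∈ U := hball (by simpa [abs_of_nonneg hy.1] using hy.2)
  have hdist := hK.dist_le_mul y hyU 0 (mem_of_mem_nhds hU)
  rw [Real.dist_eq, Real.dist_eq, hf0, sub_zero, sub_zero, abs_of_nonneg hy.1] at hdist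
  exact (le_abs_self _).trans hdist

theorem DifferentiableOn.hasDerivWithinAt_Ici_of_mem_Ico {E : Type*} [NormedAddCommGroup E]
    [NormedSpace ℝ E] {f : ℝ → E} {a b x : ℝ} (hf : DifferentiableOn ℝ f (Icc a b))
    (hx : x ∈ Ico a b) : HasDerivWithinAt f (derivWithin f (Icc a b) x) (Ici x) x :=
  (hf x (Ico_subset_Icc_self hx)).hasDerivWithinAt.mono_of_mem_nhdsWithin
    (Icc_mem_nhdsGE_of_mem hx)

theorem le_mul_exp_of_deriv_right_le_mul {f f' : ℝ → ℝ} {K a b : ℝ}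
    (hf : ContinuousOn f (Icc a b)) (hf' : ∀ x ∈ Ico a b, HasDerivWithinAt f (f' x) (Ici x) x)
    (bound : ∀ x ∈ Ico a b, f' x ≤ K * f x) :
    ∀ x ∈ Icc a b, f x ≤ f a * exp (K * (x - a)) := by
  intro x hx
  simpa only [gronwallBound_ε0] using le_gronwallBound_of_liminf_deriv_right_le (K := K) (ε := 0)
    hf (fun x hx _ hr => (hf' x hx).liminf_right_slope_le hr) le_rfl
    (by simpa only [add_zero] using bound) x hx

theorem cbf_comparison_lemma_general
    (T : ℝ) (h α : ℝ → ℝ)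
    (hdiff : DifferentiableOn ℝ h (Set.Icc 0 T))
    (hlip : LocallyLipschitz α) (hα0 : α 0 = 0)
    (h0 : h 0 < 0)
    (hineq : ∀ t ∈ Set.Icc (0 : ℝ) T, derivWithin h (Set.Icc 0 T) t ≤ α (-h t)) :
    ∀ t ∈ Set.Icc (0 : ℝ) T, h t < 0 := by
  by_contra! ⟨t₀, ht₀, hnonneg⟩
  have hcont := hdiff.continuousOn
  obtain ⟨s, hs, hhs, hneg⟩ := exists_first_le_of_lt hcont h0 ht₀ hnonneg
  obtain ⟨K, δ, hδ, hαK⟩ := hlip.exists_le_mul_of_map_zero hα0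
  have hcont_s : ContinuousWithinAt h (Ico 0 s) s :=
    (hcont s (Ioc_subset_Icc_self hs)).mono (Ico_subset_Icc_self.trans (Icc_subset_Icc_right hs.2))
  obtain ⟨l, hl, hnear⟩ : ∃ l ∈ Iio s, Ico l s ⊆ Ico 0 s ∩ {x | h s - δ < h x} :=
    mem_nhdsLT_iff_exists_Ico_subset.1 <| nhdsWithin_Ico_eq_nhdsLT hs.1 ▸
      inter_mem self_mem_nhdsWithin (hcont_s.eventually (lt_mem_nhds (sub_lt_self _ hδ)))
  have hl₀ : l ∈ Ico 0 s := (hnear (left_mem_Ico.2 hl)).1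
  have hsub : Ico l s ⊆ Ico 0 T := fun x hx => ⟨hl₀.1.trans hx.1, hx.2.trans_le hs.2⟩
  have hbound : ∀ x ∈ Ico l s, derivWithin h (Icc 0 T) x ≤ -K * h x := by
    intro x hx
    obtain ⟨hx₀, hxδ : h s - δ < h x⟩ := hnear hx
    have hxneg := hneg x hx₀
    calc derivWithin h (Icc 0 T) x ≤ α (-h x) := hineq x (Ico_subset_Icc_self (hsub hx))
      _ ≤ K * -h x := hαK _ ⟨by linarith, by linarith⟩
      _ = -K * h x := by ring
  have hgronwall : h s ≤ h l * exp (-K * (s - l)) :=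
    le_mul_exp_of_deriv_right_le_mul (hcont.mono (Icc_subset_Icc hl₀.1 hs.2))
      (fun x hx => hdiff.hasDerivWithinAt_Ici_of_mem_Ico (hsub hx)) hbound s
      (right_mem_Icc.2 hl.le)
  exact hhs.not_gt (hgronwall.trans_lt (mul_neg_of_neg_of_pos (hneg l hl₀) (exp_pos _)))

/-- Comparison lemma for control barrier functions (Lemma 2):
if `h 0 < 0` and the derivative of `h` satisfies `h' t ≤ α (-h t)` on `[0, T]`
for a locally Lipschitz, monotone increasing `α` with `α 0 = 0`,
then `h` stays strictly negative on `[0, T]`. -/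
theorem cbf_comparison_lemma
    (T : ℝ) (hT : 0 < T) (h α : ℝ → ℝ)
    (hdiff : DifferentiableOn ℝ h (Set.Icc 0 T))
    (hlip : LocallyLipschitz α) (hmono : Monotone α) (hα0 : α 0 = 0)
    (h0 : h 0 < 0)
    (hineq : ∀ t ∈ Set.Icc (0 : ℝ) T, derivWithin h (Set.Icc 0 T) t ≤ α (-h t)) :
    ∀ t ∈ Set.Icc (0 : ℝ) T, h t < 0 :=
  cbf_comparison_lemma_general T h α hdiff hlip hα0 h0 hineq
end

section
/- Let E be a real inner product space, let T > 0, d > 0, a > 0, Δ ≥ 0, and let p_i, p_j : ℝ → E be differentiable on [0, T]. Define the inter-agent distance r(t) = ‖p_i(t) − p_j(t)‖ and suppose: (i) r(0) > d; (ii) r(t) ≥ d for all t ∈ [0, T]; (iii) ‖p_i'(t) − p_j'(t)‖ ≤ a·r(t) + Δ for all t ∈ [0, T]; and (iv) r(T) = d. Then T ≥ (1/a)·log( 1 / (1 − (r(0) − d)/k₁) ), where k₁ = r(0) + Δ/a. -/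
/-!
Run backwards in time from `r T = d`, the growth bound `‖ṗ_i - ṗ_j‖ ≤ a r + Δ` is a Grönwall
inequality, so `r 0 ≤ (d + Δ/a) e^{aT} - Δ/a`. Since `1 / (1 - (r 0 - d) / k₁) = k₁ / (d + Δ/a)`,
taking logarithms gives the bound on `T`.
-/

open Set Real

theorem norm_le_gronwallBound_of_norm_deriv_left_le {E : Type*} [NormedAddCommGroup E]
    [NormedSpace ℝ E] {f f' : ℝ → E} {δ K ε a b : ℝ} (hf : ContinuousOn f (Icc a b))
    (hf' : ∀ x ∈ Ioc a b, HasDerivWithinAt f (f' x) (Iic x) x) (hb : ‖f b‖ ≤ δ)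
    (bound : ∀ x ∈ Ioc a b, ‖f' x‖ ≤ K * ‖f x‖ + ε) :
    ∀ x ∈ Icc a b, ‖f x‖ ≤ gronwallBound δ K ε (b - x) := by
  -- `s ↦ f (-s)` on `[-b, -a]` satisfies the hypotheses of the forward (right-derivative) version.
  have hneg : ∀ s ∈ Ico (-b) (-a), -s ∈ Ioc a b := fun s hs =>
    ⟨lt_neg_of_lt_neg hs.2, neg_le.mp hs.1⟩
  have hf_neg' : ∀ s ∈ Ico (-b) (-a),
      HasDerivWithinAt (fun s => f (-s)) (-f' (-s)) (Ici s) s := fun s hs => by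
    simpa [Function.comp_def] using (hf' (-s) (hneg s hs)).scomp s (hasDerivWithinAt_neg s (Ici s))
      fun _ hy => mem_Iic.mpr (neg_le_neg hy)
  have hf_neg : ContinuousOn (fun s => f (-s)) (Icc (-b) (-a)) :=
    hf.comp continuousOn_neg fun s hs => ⟨le_neg.mp hs.2, neg_le.mp hs.1⟩
  intro x hx
  simpa [neg_add_eq_sub] using
    norm_le_gronwallBound_of_norm_deriv_right_le hf_neg hf_neg' (by simpa using hb)
      (fun s hs => by simpa using bound (-s) (hneg s hs)) (-x) ⟨neg_le_neg hx.2, neg_le_neg hx.1⟩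

theorem log_le_mul_of_le_gronwallBound {δ K ε x y : ℝ} (hK : 0 < K) (hδ : 0 < δ + ε / K)
    (hy : 0 < y + ε / K) (h : y ≤ gronwallBound δ K ε x) :
    log ((y + ε / K) / (δ + ε / K)) ≤ K * x := by
  rw [gronwallBound_of_K_ne_0 hK.ne'] at h
  rw [log_le_iff_le_exp (div_pos hy hδ), div_le_iff₀ hδ]
  linarith

theorem critical_time_interagent_general
    {E : Type*} [NormedAddCommGroup E] [InnerProductSpace ℝ E]
    (T d a Δ : ℝ) (hT : 0 < T) (hd : 0 < d) (ha : 0 < a) (hΔ : 0 ≤ Δ)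
    (pi pj pi' pj' : ℝ → E)
    (hpi : ∀ t ∈ Set.Icc (0 : ℝ) T, HasDerivWithinAt pi (pi' t) (Set.Icc 0 T) t)
    (hpj : ∀ t ∈ Set.Icc (0 : ℝ) T, HasDerivWithinAt pj (pj' t) (Set.Icc 0 T) t)
    (r : ℝ → ℝ) (hr : r = fun t => ‖pi t - pj t‖)
    (h0 : r 0 > d)
    (hvel : ∀ t ∈ Set.Icc (0 : ℝ) T, ‖pi' t - pj' t‖ ≤ a * r t + Δ)
    (hTd : r T = d) :
    T ≥ (1 / a) * Real.log (1 / (1 - (r 0 - d) / (r 0 + Δ / a))) := by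
  have hderiv : ∀ t ∈ Icc 0 T,
      HasDerivWithinAt (fun t => pi t - pj t) (pi' t - pj' t) (Icc 0 T) t :=
    fun t ht => (hpi t ht).sub (hpj t ht)
  have hr0 : r 0 ≤ gronwallBound d a Δ T := by
    subst hr
    simpa using norm_le_gronwallBound_of_norm_deriv_left_le
      (fun t ht => (hderiv t ht).continuousWithinAt)
      (fun t ht => (hderiv t (Ioc_subset_Icc_self ht)).mono_of_mem_nhdsWithin
        (Icc_mem_nhdsLE_of_mem ht))
      hTd.le (fun t ht => hvel t (Ioc_subset_Icc_self ht)) 0 ⟨le_rfl, hT.le⟩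
  have hΔa : 0 ≤ Δ / a := div_nonneg hΔ ha.le
  have hlog := log_le_mul_of_le_gronwallBound ha (by positivity) (by linarith) hr0
  have hratio : 1 / (1 - (r 0 - d) / (r 0 + Δ / a)) = (r 0 + Δ / a) / (d + Δ / a) := by
    rw [one_sub_div (by linarith), one_div_div]
    ring
  rwa [hratio, ge_iff_le, one_div_mul_eq_div, div_le_iff₀' ha]

/-- Theorem 1 (critical time period for inter-agent safety): if the inter-agent
distance `r t = ‖pi t - pj t‖` starts above the safety distance `d`, stays at
least `d` on `[0, T]`, the relative velocity satisfies
`‖pi' t - pj' t‖ ≤ a * r t + Δ`, and `r T = d`, then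
`T ≥ (1 / a) * log (1 / (1 - (r 0 - d) / k₁))` with `k₁ = r 0 + Δ / a`. -/
theorem critical_time_interagent
    {E : Type*} [NormedAddCommGroup E] [InnerProductSpace ℝ E]
    (T d a Δ : ℝ) (hT : 0 < T) (hd : 0 < d) (ha : 0 < a) (hΔ : 0 ≤ Δ)
    (pi pj pi' pj' : ℝ → E)
    (hpi : ∀ t ∈ Set.Icc (0 : ℝ) T, HasDerivWithinAt pi (pi' t) (Set.Icc 0 T) t)
    (hpj : ∀ t ∈ Set.Icc (0 : ℝ) T, HasDerivWithinAt pj (pj' t) (Set.Icc 0 T) t)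
    (r : ℝ → ℝ) (hr : r = fun t => ‖pi t - pj t‖)
    (h0 : r 0 > d)
    (hge : ∀ t ∈ Set.Icc (0 : ℝ) T, d ≤ r t)
    (hvel : ∀ t ∈ Set.Icc (0 : ℝ) T, ‖pi' t - pj' t‖ ≤ a * r t + Δ)
    (hTd : r T = d) :
    T ≥ (1 / a) * Real.log (1 / (1 - (r 0 - d) / (r 0 + Δ / a))) :=
  critical_time_interagent_general T d a Δ hT hd ha hΔ pi pj pi' pj' hpi hpj r hr h0 hvel hTd
end

section
/- Let E be a real inner product space, let T > 0, d > 0, b_f > 0, Δ ≥ 0, let f : E → E be Lipschitz with constant b_f, and let p_i, p_j : ℝ → E and w_i, w_j : ℝ → E satisfy p_i'(t) = f(p_i(t)) + w_i(t) and p_j'(t) = f(p_j(t)) + w_j(t) with ‖w_i(t) − w_j(t)‖ ≤ Δ for all t ∈ [0, T]. Define r(t) = ‖p_i(t) − p_j(t)‖ and suppose r(0) > d, r(t) ≥ d for all t ∈ [0, T], and r(T) = d. Then T ≥ (1/b_f)·log( 1 / (1 − (r(0) − d)/k₁) ), where k₁ = r(0) + Δ/b_f. -/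
/-!
The difference `q = pi - pj` satisfies `‖q'‖ ≤ bf ‖q‖ + Δ`, by the Lipschitz bound on `f` and the
bound on `wi - wj`. Running Grönwall's inequality backwards in time from `T`, where `‖q T‖ = d`,
gives `r 0 + Δ / bf ≤ (d + Δ / bf) * exp (bf * T)`; taking logarithms is the claim.
-/

open Set Real

theorem LipschitzWith.norm_add_sub_add_le {E F : Type*} [PseudoMetricSpace E]
    [SeminormedAddCommGroup F] {K : NNReal} {f : E → F} (hf : LipschitzWith K f) (x y : E)
    (u v : F) : ‖(f x + u) - (f y + v)‖ ≤ K * dist x y + ‖u - v‖ :=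
  calc ‖(f x + u) - (f y + v)‖ = ‖(f x - f y) + (u - v)‖ := by rw [add_sub_add_comm]
    _ ≤ ‖f x - f y‖ + ‖u - v‖ := norm_add_le _ _
    _ ≤ K * dist x y + ‖u - v‖ := by
      gcongr
      rw [← dist_eq_norm]
      exact hf.dist_le_mul x y

theorem gronwallBound_add_div {δ K ε : ℝ} (hK : K ≠ 0) (x : ℝ) :
    gronwallBound δ K ε x + ε / K = (δ + ε / K) * exp (K * x) := by
  rw [gronwallBound_of_K_ne_0 hK]
  ring

theorem inv_mul_log_le_of_le_gronwallBound {R δ K ε x : ℝ} (hK : 0 < K) (hR : 0 < R + ε / K)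
    (hδ : 0 < δ + ε / K) (h : R ≤ gronwallBound δ K ε x) :
    K⁻¹ * log ((R + ε / K) / (δ + ε / K)) ≤ x := by
  rw [inv_mul_le_iff₀ hK, log_le_iff_le_exp (by positivity), div_le_iff₀ hδ,
    mul_comm, ← gronwallBound_add_div hK.ne']
  linarith

theorem critical_time_interagent_dynamics_general
    {E : Type*} [NormedAddCommGroup E] [InnerProductSpace ℝ E]
    (T d bf Δ : ℝ) (hT : 0 < T) (hd : 0 < d) (hbf : 0 < bf) (hΔ : 0 ≤ Δ)
    (f : E → E) (hf : LipschitzWith (Real.toNNReal bf) f)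
    (pi pj wi wj : ℝ → E)
    (hpi : ∀ t ∈ Set.Icc (0 : ℝ) T,
      HasDerivWithinAt pi (f (pi t) + wi t) (Set.Icc 0 T) t)
    (hpj : ∀ t ∈ Set.Icc (0 : ℝ) T,
      HasDerivWithinAt pj (f (pj t) + wj t) (Set.Icc 0 T) t)
    (hw : ∀ t ∈ Set.Icc (0 : ℝ) T, ‖wi t - wj t‖ ≤ Δ)
    (r : ℝ → ℝ) (hr : r = fun t => ‖pi t - pj t‖)
    (h0 : r 0 > d)
    (hTd : r T = d) :
    T ≥ (1 / bf) * Real.log (1 / (1 - (r 0 - d) / (r 0 + Δ / bf))) := by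
  have hderiv : ∀ t ∈ Icc 0 T, HasDerivWithinAt (fun t => pi t - pj t)
      ((f (pi t) + wi t) - (f (pj t) + wj t)) (Icc 0 T) t :=
    fun t ht => (hpi t ht).sub (hpj t ht)
  have hbound : ∀ t ∈ Icc 0 T,
      ‖(f (pi t) + wi t) - (f (pj t) + wj t)‖ ≤ bf * ‖pi t - pj t‖ + Δ := fun t ht =>
    calc _ ≤ Real.toNNReal bf * dist (pi t) (pj t) + ‖wi t - wj t‖ := hf.norm_add_sub_add_le ..
      _ ≤ bf * ‖pi t - pj t‖ + Δ := by
        rw [Real.coe_toNNReal bf hbf.le, dist_eq_norm]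
        gcongr
        exact hw t ht
  have hgronwall : r 0 ≤ gronwallBound (r T) bf Δ T := by
    rw [hr]
    simpa using norm_le_gronwallBound_of_norm_deriv_left_le
      (fun t ht => (hderiv t ht).continuousWithinAt)
      (fun t ht => (hderiv t (Ioc_subset_Icc_self ht)).mono_of_mem_nhdsWithin
        (Icc_mem_nhdsLE_of_mem ht))
      le_rfl (fun t ht => hbound t (Ioc_subset_Icc_self ht)) 0 (left_mem_Icc.2 hT.le)
  have hR : 0 < r 0 + Δ / bf := by
    have : 0 ≤ Δ / bf := by positivity
    linarith
  have hratio : 1 - (r 0 - d) / (r 0 + Δ / bf) = (d + Δ / bf) / (r 0 + Δ / bf) := by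
    rw [eq_div_iff hR.ne', sub_mul, div_mul_cancel₀ _ hR.ne']
    ring
  rw [ge_iff_le, hratio, one_div_div, one_div]
  exact inv_mul_log_le_of_le_gronwallBound hbf hR (by positivity) (hTd ▸ hgronwall)

/-- Variant of Theorem 1 with the relative-velocity bound derived from the
dynamics: both agents move under the same Lipschitz drift `f` (constant `b_f`)
plus inputs `wi`, `wj` with `‖wi t - wj t‖ ≤ Δ`; if the inter-agent distance
`r t = ‖pi t - pj t‖` starts above `d`, stays at least `d` on `[0, T]`, and
reaches the safety boundary `r T = d`, then
`T ≥ (1 / b_f) * log (1 / (1 - (r 0 - d) / k₁))` with `k₁ = r 0 + Δ / b_f`. -/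
theorem critical_time_interagent_dynamics
    {E : Type*} [NormedAddCommGroup E] [InnerProductSpace ℝ E]
    (T d bf Δ : ℝ) (hT : 0 < T) (hd : 0 < d) (hbf : 0 < bf) (hΔ : 0 ≤ Δ)
    (f : E → E) (hf : LipschitzWith (Real.toNNReal bf) f)
    (pi pj wi wj : ℝ → E)
    (hpi : ∀ t ∈ Set.Icc (0 : ℝ) T,
      HasDerivWithinAt pi (f (pi t) + wi t) (Set.Icc 0 T) t)
    (hpj : ∀ t ∈ Set.Icc (0 : ℝ) T,
      HasDerivWithinAt pj (f (pj t) + wj t) (Set.Icc 0 T) t)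
    (hw : ∀ t ∈ Set.Icc (0 : ℝ) T, ‖wi t - wj t‖ ≤ Δ)
    (r : ℝ → ℝ) (hr : r = fun t => ‖pi t - pj t‖)
    (h0 : r 0 > d)
    (hge : ∀ t ∈ Set.Icc (0 : ℝ) T, d ≤ r t)
    (hTd : r T = d) :
    T ≥ (1 / bf) * Real.log (1 / (1 - (r 0 - d) / (r 0 + Δ / bf))) :=
  critical_time_interagent_dynamics_general T d bf Δ hT hd hbf hΔ f hf pi pj wi wj hpi hpj hw r hr
    h0 hTd
end

section
/- Let E be a real inner product space, let T > 0, ρ > 0, a > 0, let c ∈ E, and let p : ℝ → E be differentiable on [0, T]. Define v(t) = ‖p(t) − c‖ and suppose: (i) v(0) > ρ; (ii) v(t) ≥ ρ for all t ∈ [0, T]; (iii) ‖p'(t)‖ ≤ a·(v(t) + ρ) for all t ∈ [0, T]; and (iv) v(T) = ρ. Then T ≥ (1/a)·log( 1 / (1 − (v(0) − ρ)/(v(0) + ρ)) ). -/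
/-!
Run time backwards from the moment of contact. The quantity `w = v + ρ` then grows at rate at most
`a * w`, so Grönwall's inequality gives `v 0 + ρ ≤ 2 * ρ * exp (a * T)`, and
`1 / (1 - (v 0 - ρ) / (v 0 + ρ))` is exactly `(v 0 + ρ) / (2 * ρ)`.
-/

open Set Real Pointwise

section Gronwall

variable {E : Type*} [NormedAddCommGroup E] [NormedSpace ℝ E]

theorem HasDerivWithinAt.comp_neg {f : ℝ → E} {f' : E} {s : Set ℝ} {t : ℝ}
    (hf : HasDerivWithinAt f f' s (-t)) :
    HasDerivWithinAt (fun x => f (-x)) (-f') (-s) t := by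
  simpa [Function.comp_def] using hf.scomp t (hasDerivWithinAt_neg t (-s)) fun _ hx => hx

theorem norm_le_gronwallBound_of_norm_deriv_le_of_norm_right_le {f f' : ℝ → E} {δ K ε a b : ℝ}
    (hf : ∀ t ∈ Icc a b, HasDerivWithinAt f (f' t) (Icc a b) t)
    (hb : ‖f b‖ ≤ δ) (bound : ∀ t ∈ Icc a b, ‖f' t‖ ≤ K * ‖f t‖ + ε) :
    ∀ t ∈ Icc a b, ‖f t‖ ≤ gronwallBound δ K ε (b - t) := by
  have hg (s) (hs : s ∈ Icc (-b) (-a)) :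
      HasDerivWithinAt (fun x => f (-x)) (-f' (-s)) (Icc (-b) (-a)) s := by
    rw [← neg_Icc] at hs ⊢
    exact (hf (-s) hs).comp_neg
  intro t ht
  have := norm_le_gronwallBound_of_norm_deriv_right_le (f := fun x => f (-x))
    (fun s hs => (hg s hs).continuousWithinAt)
    (fun s hs => (hg s (Ico_subset_Icc_self hs)).mono_of_mem_nhdsWithin
      (Icc_mem_nhdsGE_of_mem hs))
    (by simpa using hb)
    (fun s hs => by simpa using bound (-s) (by simpa [← neg_Icc] using Ico_subset_Icc_self hs))
    (-t) ⟨neg_le_neg ht.2, neg_le_neg ht.1⟩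
  rw [show b - t = -t - -b by ring]
  simpa using this

end Gronwall

theorem gronwallBound_mul_self {δ K : ℝ} (hK : K ≠ 0) (x : ℝ) :
    gronwallBound δ K (K * δ) x = 2 * δ * exp (K * x) - δ := by
  rw [gronwallBound_of_K_ne_0 hK, mul_div_cancel_left₀ δ hK]
  ring

theorem one_div_one_sub_div_add {v ρ : ℝ} (h : v + ρ ≠ 0) :
    1 / (1 - (v - ρ) / (v + ρ)) = (v + ρ) / (2 * ρ) := by
  rw [one_sub_div h, one_div_div]
  ring

theorem critical_time_obstacle_general
    {E : Type*} [NormedAddCommGroup E] [InnerProductSpace ℝ E]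
    (T ρ a : ℝ) (hT : 0 < T) (hρ : 0 < ρ) (ha : 0 < a) (c : E)
    (p p' : ℝ → E)
    (hp : ∀ t ∈ Set.Icc (0 : ℝ) T, HasDerivWithinAt p (p' t) (Set.Icc 0 T) t)
    (v : ℝ → ℝ) (hv : v = fun t => ‖p t - c‖)
    (hvel : ∀ t ∈ Set.Icc (0 : ℝ) T, ‖p' t‖ ≤ a * (v t + ρ))
    (hTρ : v T = ρ) :
    T ≥ (1 / a) * Real.log (1 / (1 - (v 0 - ρ) / (v 0 + ρ))) := by
  subst hv
  have hgron : ‖p 0 - c‖ ≤ 2 * ρ * exp (a * T) - ρ := by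
    rw [← gronwallBound_mul_self ha.ne', ← sub_zero T]
    refine norm_le_gronwallBound_of_norm_deriv_le_of_norm_right_le
      (fun t ht => (hp t ht).sub_const c) hTρ.le (fun t ht => ?_) 0 ⟨le_rfl, hT.le⟩
    linarith [hvel t ht]
  have hsum : 0 < ‖p 0 - c‖ + ρ := by positivity
  rw [one_div_one_sub_div_add hsum.ne', ge_iff_le, one_div, inv_mul_le_iff₀ ha,
    log_le_iff_le_exp (by positivity), div_le_iff₀ (by positivity)]
  linarith

/-- Theorem 2 (critical time period for agent-to-obstacle safety): for a static
spherical obstacle with center `c` and radius `ρ`, if the distance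
`v t = ‖p t - c‖` starts above `ρ`, stays at least `ρ` on `[0, T]`, the speed
satisfies `‖p' t‖ ≤ a * (v t + ρ)`, and `v T = ρ`, then
`T ≥ (1 / a) * log (1 / (1 - (v 0 - ρ) / (v 0 + ρ)))`. -/
theorem critical_time_obstacle
    {E : Type*} [NormedAddCommGroup E] [InnerProductSpace ℝ E]
    (T ρ a : ℝ) (hT : 0 < T) (hρ : 0 < ρ) (ha : 0 < a) (c : E)
    (p p' : ℝ → E)
    (hp : ∀ t ∈ Set.Icc (0 : ℝ) T, HasDerivWithinAt p (p' t) (Set.Icc 0 T) t)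
    (v : ℝ → ℝ) (hv : v = fun t => ‖p t - c‖)
    (h0 : v 0 > ρ)
    (hge : ∀ t ∈ Set.Icc (0 : ℝ) T, ρ ≤ v t)
    (hvel : ∀ t ∈ Set.Icc (0 : ℝ) T, ‖p' t‖ ≤ a * (v t + ρ))
    (hTρ : v T = ρ) :
    T ≥ (1 / a) * Real.log (1 / (1 - (v 0 - ρ) / (v 0 + ρ))) :=
  critical_time_obstacle_general T ρ a hT hρ ha c p p' hp v hv hvel hTρ
end

section
/- Let J and O be finite index sets, let d > 0, n_c ≥ 1 a natural number, and for each j ∈ J let D_j > 0 and η_j > 0, and for each o ∈ O let r_o > 0, V_o > 0 and η_o > 0. Define Γ = max over all j ∈ J and o ∈ O of { d/D_j , r_o/V_o }, Γ^w = 1 − max over all j ∈ J and o ∈ O of { η_j/D_j , η_o/V_o }, S = exp(−Γ^{n_c}) and S^w = exp(−(Γ^w)^{n_c}). Assume Γ^w ≥ 0 and |S − 1| ≤ |S^w − 1|. Then D_j ≥ d + η_j > d for every j ∈ J and V_o ≥ r_o + η_o > r_o for every o ∈ O; in particular all inter-agent and agent-to-obstacle safety constraints hold strictly. -/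
/-!
Since `S^w ≤ 1`, the monitor condition forces `S^w ≤ S`, i.e. `Γ ^ n_c ≤ (Γ^w) ^ n_c`, and as
`Γ^w ≥ 0` and `n_c ≠ 0` this gives `Γ ≤ Γ^w`. Unfolding the two maxima, every pair of ratios satisfies
`d / D_j + η_j / D_j ≤ Γ + (1 - Γ^w) ≤ 1` (and likewise for obstacles), i.e. `d + η_j ≤ D_j`.
-/

lemma le_of_abs_sub_le_abs_sub {G : Type*} [AddCommGroup G] [LinearOrder G]
    [IsOrderedAddMonoid G] {a b c : G} (hac : a ≤ c) (h : |b - c| ≤ |a - c|) : a ≤ b := by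
  have hb : c - b ≤ |b - c| := by rw [abs_sub_comm]; exact le_abs_self _
  rw [abs_of_nonpos (sub_nonpos.mpr hac), neg_sub] at h
  exact (sub_le_sub_iff_left c).mp (hb.trans h)

lemma le_of_exp_neg_pow_le {a b : ℝ} {n : ℕ} (hn : n ≠ 0) (hb : 0 ≤ b)
    (h : Real.exp (-b ^ n) ≤ Real.exp (-a ^ n)) : a ≤ b :=
  le_of_pow_le_pow_left₀ hn hb (by simpa using h)

lemma add_le_one_of_sSup_le_one_sub_sSup {A B : Set ℝ} (hA : A.Finite) (hB : B.Finite)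
    (h : sSup A ≤ 1 - sSup B) : ∀ x ∈ A, ∀ y ∈ B, x + y ≤ 1 := by
  intro x hx y hy
  have := le_csSup hA.bddAbove hx
  have := le_csSup hB.bddAbove hy
  linarith

lemma add_le_and_lt_of_div_add_div_le_one {a η D : ℝ} (hD : 0 < D) (hη : 0 < η)
    (h : a / D + η / D ≤ 1) : a + η ≤ D ∧ a < D := by
  rw [← add_div, div_le_one hD] at h
  exact ⟨h, by linarith⟩

theorem safety_behavior_monitor_general
    {α β : Type*} (J : Finset α) (O : Finset β)
    (d : ℝ) (nc : ℕ) (hnc : 1 ≤ nc)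
    (D η : α → ℝ) (hD : ∀ j ∈ J, 0 < D j) (hη : ∀ j ∈ J, 0 < η j)
    (r V ηo : β → ℝ) (hV : ∀ o ∈ O, 0 < V o)
    (hηo : ∀ o ∈ O, 0 < ηo o)
    (Γ Γw S Sw : ℝ)
    (hΓ : Γ = sSup ((fun j => d / D j) '' ↑J ∪ (fun o => r o / V o) '' ↑O))
    (hΓw : Γw = 1 - sSup ((fun j => η j / D j) '' ↑J ∪
      (fun o => ηo o / V o) '' ↑O))
    (hS : S = Real.exp (-Γ ^ nc)) (hSw : Sw = Real.exp (-Γw ^ nc))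
    (hΓw0 : 0 ≤ Γw) (hle : |S - 1| ≤ |Sw - 1|) :
    (∀ j ∈ J, d + η j ≤ D j ∧ d < D j) ∧
    (∀ o ∈ O, r o + ηo o ≤ V o ∧ r o < V o) := by
  have hSw1 : Sw ≤ 1 := by
    rw [hSw, Real.exp_le_one_iff, neg_nonpos]
    exact pow_nonneg hΓw0 _
  have hΓΓw : Γ ≤ Γw := by
    refine le_of_exp_neg_pow_le (Nat.one_le_iff_ne_zero.mp hnc) hΓw0 ?_
    rw [← hS, ← hSw]
    exact le_of_abs_sub_le_abs_sub hSw1 hle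
  rw [hΓ, hΓw] at hΓΓw
  have hsum := add_le_one_of_sSup_le_one_sub_sSup (Set.toFinite _) (Set.toFinite _) hΓΓw
  exact ⟨fun j hj => add_le_and_lt_of_div_add_div_le_one (hD j hj) (hη j hj)
      (hsum _ (Or.inl ⟨j, hj, rfl⟩) _ (Or.inl ⟨j, hj, rfl⟩)),
    fun o ho => add_le_and_lt_of_div_add_div_le_one (hV o ho) (hηo o ho)
      (hsum _ (Or.inr ⟨o, ho, rfl⟩) _ (Or.inr ⟨o, ho, rfl⟩))⟩

/-- Theorem 3 (safety behavior monitor): if the deviation `|S - 1|` of the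
safety behavior metric `S = exp (-Γ ^ n_c)` from its nominal value `1` stays
within the worst-case threshold `|S^w - 1|` determined by the critical zones
`η_j`, `η_o`, then all inter-agent and agent-to-obstacle safety constraints
hold strictly with margin given by the critical zones. -/
theorem safety_behavior_monitor
    {α β : Type*} (J : Finset α) (O : Finset β)
    (d : ℝ) (hd : 0 < d) (nc : ℕ) (hnc : 1 ≤ nc)
    (D η : α → ℝ) (hD : ∀ j ∈ J, 0 < D j) (hη : ∀ j ∈ J, 0 < η j)
    (r V ηo : β → ℝ) (hr : ∀ o ∈ O, 0 < r o) (hV : ∀ o ∈ O, 0 < V o)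
    (hηo : ∀ o ∈ O, 0 < ηo o)
    (Γ Γw S Sw : ℝ)
    (hΓ : Γ = sSup ((fun j => d / D j) '' ↑J ∪ (fun o => r o / V o) '' ↑O))
    (hΓw : Γw = 1 - sSup ((fun j => η j / D j) '' ↑J ∪
      (fun o => ηo o / V o) '' ↑O))
    (hS : S = Real.exp (-Γ ^ nc)) (hSw : Sw = Real.exp (-Γw ^ nc))
    (hΓw0 : 0 ≤ Γw) (hle : |S - 1| ≤ |Sw - 1|) :
    (∀ j ∈ J, d + η j ≤ D j ∧ d < D j) ∧
    (∀ o ∈ O, r o + ηo o ≤ V o ∧ r o < V o) :=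
  safety_behavior_monitor_general J O d nc hnc D η hD hη r V ηo hV hηo Γ Γw S Sw hΓ hΓw hS hSw hΓw0
    hle
end
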